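/- Let (A, m) be a noetherian local ring with residue field k = A/m, and let M be a bounded-above complex of A-modules with finitely generated homology. Then M is acyclic (quasi-isomorphic to 0) if and only if k ⊗^L_A M is acyclic. -/

import Mathlib

open CategoryTheory MonoidalCategory Limits

variable {A : Type} [CommRing A]


lemma exactAt_iff_concrete (C : CochainComplex (ModuleCat A) ℤ) (i j k : ℤ)
    (hij : i + 1 = j) (hjk : j + 1 = k) :
    C.ExactAt j ↔ ∀ x : C.X j, C.d j k x = 0 → ∃ y : C.X i, C.d i j y = x := by
  rw [C.exactAt_iff' i j k (by rw [CochainComplex.prev]; omega)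
    (by rw [CochainComplex.next]; omega)]
  exact (C.sc' i j k).moduleCat_exact_iff

/-- `Splits C n m l` (for `n+1 = m`, `m+1 = l`): the corestriction
`C.X n → ker (C.d m l)` of the differential admits a linear section. -/
def Splits (C : CochainComplex (ModuleCat A) ℤ) (n m l : ℤ) : Prop :=
  ∃ σ : ↥(LinearMap.ker (C.d m l).hom) →ₗ[A] C.X n, ∀ z, C.d n m (σ z) = z.1

lemma isZero_eq_zero {X : ModuleCat A} (h : IsZero X) (x : X) : x = 0 := by
  have : (𝟙 X : X ⟶ X) = 0 := h.eq_of_src _ _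
  calc x = (𝟙 X : X ⟶ X) x := rfl
  _ = (0 : X ⟶ X) x := by rw [this]
  _ = 0 := rfl

lemma splits_of_exact (C : CochainComplex (ModuleCat A) ℤ) (b : ℤ)
    (hb : ∀ n, b < n → IsZero (C.X n))
    (hproj : ∀ n, Module.Projective A (C.X n)) (s : ℤ)
    (hex : ∀ m, s < m → C.ExactAt m) :
    ∀ n m l : ℤ, s ≤ n → n + 1 = m → m + 1 = l → Splits C n m l := by
  suffices h : ∀ (κ : ℕ) (n m l : ℤ), s ≤ n → n + 1 = m → m + 1 = l →
      b ≤ n + κ → Splits C n m l by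
    intro n m l hs hnm hml
    rcases le_or_gt b n with hbn | hnb
    · exact h 0 n m l hs hnm hml (by omega)
    · exact h (b - n).toNat n m l hs hnm hml (by omega)
  intro κ
  induction κ with
  | zero =>
    intro n m l hs hnm hml hbn
    refine ⟨0, fun z => ?_⟩
    have hz : (z.1 : C.X m) = 0 := isZero_eq_zero (hb m (by omega)) _
    simp [hz]
  | succ κ ih =>
    intro n m l hs hnm hml hbn
    -- previous step: splitting at (m, l, l+1)
    obtain ⟨σ', hσ'⟩ := ih m l (l + 1) (by omega) (by omega) rfl (by omega)
    -- Z₁ := ker (C.d m l), target of the surjection d : X n → Z₁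
    set Z₁ := LinearMap.ker (C.d m l).hom with hZ₁
    -- the corestriction d' : X n →ₗ Z₁
    have hmem : ∀ x : C.X n, C.d n m x ∈ Z₁ := by
      intro x
      rw [LinearMap.mem_ker]
      exact LinearMap.congr_fun (congrArg ModuleCat.Hom.hom (C.d_comp_d n m l)) x
    set d' : C.X n →ₗ[A] ↥Z₁ := LinearMap.codRestrict Z₁ (C.d n m).hom hmem with hd'
    -- d' is surjective, by exactness at m
    have hsurj : Function.Surjective d' := by
      intro z
      obtain ⟨y, hy⟩ := (exactAt_iff_concrete C n m l hnm hml).1 (hex m (by omega)) z.1 z.2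
      exact ⟨y, Subtype.ext hy⟩
    -- Z₁ is projective: it is a retract of the projective module X m
    have hmem2 : ∀ x : C.X m, C.d m l x ∈ LinearMap.ker (C.d l (l + 1)).hom := by
      intro x
      rw [LinearMap.mem_ker]
      exact LinearMap.congr_fun (congrArg ModuleCat.Hom.hom (C.d_comp_d m l (l + 1))) x
    have hmemr : ∀ x : C.X m,
        x - σ' (LinearMap.codRestrict _ (C.d m l).hom hmem2 x) ∈ Z₁ := by
      intro x
      rw [LinearMap.mem_ker, map_sub, hσ']
      simp
    set r : C.X m →ₗ[A] ↥Z₁ :=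
      LinearMap.codRestrict Z₁
        (LinearMap.id - σ' ∘ₗ LinearMap.codRestrict _ (C.d m l).hom hmem2) hmemr with hr
    have hretr : r.comp Z₁.subtype = LinearMap.id := by
      ext z
      have hz : (LinearMap.codRestrict _ (C.d m l).hom hmem2) z.1 = 0 := by
        apply Subtype.ext
        simpa using z.2
      simp [hr, hz]
    have : Module.Projective A (C.X m) := hproj m
    have hZproj : Module.Projective A ↥Z₁ :=
      Module.Projective.of_split Z₁.subtype r hretr
    obtain ⟨σ, hσ⟩ := Module.projective_lifting_property d' LinearMap.id hsurj
    refine ⟨σ, fun z => ?_⟩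
    simpa [d'] using congrArg Subtype.val (LinearMap.congr_fun hσ z)


lemma one_tmul_surjective (I : Ideal A) (X : Type) [AddCommGroup X] [Module A X]
    (t : TensorProduct A (A ⧸ I) X) : ∃ x : X, (1 : A ⧸ I) ⊗ₜ[A] x = t := by
  induction t with
  | zero => exact ⟨0, by simp⟩
  | tmul c x =>
    obtain ⟨a, rfl⟩ := Ideal.Quotient.mk_surjective c
    refine ⟨a • x, ?_⟩
    rw [TensorProduct.tmul_smul, TensorProduct.smul_tmul']
    congr 1
    show a • (1 : A ⧸ I) = _
    rw [← Algebra.algebraMap_eq_smul_one, Ideal.Quotient.algebraMap_eq]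
  | add t₁ t₂ h₁ h₂ =>
    obtain ⟨x₁, rfl⟩ := h₁
    obtain ⟨x₂, rfl⟩ := h₂
    exact ⟨x₁ + x₂, by rw [TensorProduct.tmul_add]⟩

lemma one_tmul_eq_zero (I : Ideal A) (X : Type) [AddCommGroup X] [Module A X]
    (u : X) (h : (1 : A ⧸ I) ⊗ₜ[A] u = 0) : u ∈ I • (⊤ : Submodule A X) := by
  have := congrArg (TensorProduct.quotTensorEquivQuotSMul X I) h
  rw [map_zero] at this
  have h1 : (1 : A ⧸ I) = Ideal.Quotient.mk I 1 := rfl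
  rw [h1, TensorProduct.quotTensorEquivQuotSMul_mk_tmul, one_smul] at this
  rwa [Submodule.Quotient.mk_eq_zero] at this

-- test how the tensored complex's d applies
example (P : CochainComplex (ModuleCat A) ℤ) (k : ModuleCat A) (i j : ℤ)
    (x : (((tensorLeft k).mapHomologicalComplex (ComplexShape.up ℤ)).obj P).X i) :
    ((((tensorLeft k).mapHomologicalComplex (ComplexShape.up ℤ)).obj P).d i j) x
      = LinearMap.lTensor k (P.d i j).hom x := rfl

example (P : CochainComplex (ModuleCat A) ℤ) (k : ModuleCat A) (i : ℤ) :
    ((((tensorLeft k).mapHomologicalComplex (ComplexShape.up ℤ)).obj P).X i : Type)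
      = TensorProduct A k (P.X i) := rfl

lemma tensor_exactAt (k : ModuleCat A) (P : CochainComplex (ModuleCat A) ℤ) (b : ℤ)
    (hb : ∀ n, b < n → IsZero (P.X n))
    (hproj : ∀ n, Module.Projective A (P.X n))
    (hex : ∀ m : ℤ, P.ExactAt m) (j : ℤ) :
    (((tensorLeft k).mapHomologicalComplex (ComplexShape.up ℤ)).obj P).ExactAt j := by
  set Q := ((tensorLeft k).mapHomologicalComplex (ComplexShape.up ℤ)).obj P with hQ
  rw [exactAt_iff_concrete Q (j-1) j (j+1) (by omega) rfl]
  intro x hx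
  obtain ⟨σ, hσ⟩ := splits_of_exact P b hb hproj (j-1) (fun m _ => hex m)
    (j-1) j (j+1) le_rfl (by omega) rfl
  obtain ⟨σ', hσ'⟩ := splits_of_exact P b hb hproj (j-1) (fun m _ => hex m)
    j (j+1) (j+2) (by omega) rfl (by omega)
  obtain ⟨σ'', hσ''⟩ := splits_of_exact P b hb hproj (j-1) (fun m _ => hex m)
    (j+1) (j+2) (j+3) (by omega) (by omega) (by omega)
  -- c : X j →ₗ ker (d (j+1) (j+2))
  have hmc : ∀ v : P.X j, P.d j (j+1) v ∈ LinearMap.ker (P.d (j+1) (j+2)).hom := fun v =>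
    LinearMap.congr_fun (congrArg ModuleCat.Hom.hom (P.d_comp_d j (j+1) (j+2))) v
  set c : P.X j →ₗ[A] ↥(LinearMap.ker (P.d (j+1) (j+2)).hom) :=
    LinearMap.codRestrict _ (P.d j (j+1)).hom hmc with hc'
  -- r' : X (j+1) →ₗ ker (d (j+1) (j+2)), retraction
  have hmc2 : ∀ v : P.X (j+1), P.d (j+1) (j+2) v ∈ LinearMap.ker (P.d (j+2) (j+3)).hom := fun v =>
    LinearMap.congr_fun (congrArg ModuleCat.Hom.hom (P.d_comp_d (j+1) (j+2) (j+3))) v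
  have hmr : ∀ v : P.X (j+1),
      v - σ'' (LinearMap.codRestrict _ (P.d (j+1) (j+2)).hom hmc2 v) ∈
        LinearMap.ker (P.d (j+1) (j+2)).hom := by
    intro v
    rw [LinearMap.mem_ker, map_sub, hσ'']
    simp
  set r' : P.X (j+1) →ₗ[A] ↥(LinearMap.ker (P.d (j+1) (j+2)).hom) :=
    LinearMap.codRestrict _
      (LinearMap.id - σ'' ∘ₗ LinearMap.codRestrict _ (P.d (j+1) (j+2)).hom hmc2) hmr with hr'
  have hcr : c = r' ∘ₗ (P.d j (j+1)).hom := by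
    ext v
    have h0 : (LinearMap.codRestrict _ (P.d (j+1) (j+2)).hom hmc2) (P.d j (j+1) v) = 0 :=
      Subtype.ext (hmc v)
    simp [hc', hr', h0]
  -- ρ : X j →ₗ ker (d j (j+1))
  have hmρ : ∀ v : P.X j, v - σ' (c v) ∈ LinearMap.ker (P.d j (j+1)).hom := by
    intro v
    rw [LinearMap.mem_ker, map_sub, hσ']
    simp [hc']
  set ρ : P.X j →ₗ[A] ↥(LinearMap.ker (P.d j (j+1)).hom) :=
    LinearMap.codRestrict _ (LinearMap.id - σ' ∘ₗ c) hmρ with hρ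
  set h : P.X j →ₗ[A] P.X (j-1) := σ ∘ₗ ρ with hh
  have key : (P.d (j-1) j).hom ∘ₗ h =
      LinearMap.id - (σ' ∘ₗ r') ∘ₗ (P.d j (j+1)).hom := by
    ext v
    have h1 : (P.d (j-1) j) (σ (ρ v)) = (ρ v).1 := hσ _
    have h2 : ((ρ v : P.X j)) = v - σ' (c v) := rfl
    simp only [LinearMap.comp_apply, LinearMap.sub_apply, LinearMap.id_apply, hh]
    rw [h1, h2, hcr]
    rfl
  refine ⟨LinearMap.lTensor k h x, ?_⟩
  show LinearMap.lTensor k (P.d (j-1) j).hom (LinearMap.lTensor k h x) = x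
  have hkey : ∀ t : TensorProduct A (k : Type) ((P.X j : ModuleCat A) : Type),
      LinearMap.lTensor k (P.d (j-1) j).hom (LinearMap.lTensor k h t)
      = t - LinearMap.lTensor k (σ' ∘ₗ r') (LinearMap.lTensor k (P.d j (j+1)).hom t) := by
    intro t
    have h3 := LinearMap.congr_fun (congrArg (LinearMap.lTensor (k : Type)) key) t
    rw [LinearMap.lTensor_sub, LinearMap.lTensor_id, LinearMap.lTensor_comp] at h3
    simpa [hh, LinearMap.lTensor_comp] using h3
  rw [hkey x]
  have hx' : LinearMap.lTensor k (P.d j (j+1)).hom x = 0 := hx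
  rw [hx', map_zero]
  exact sub_zero _

lemma isZero_homology_of_tensor [IsLocalRing A]
    (P : CochainComplex (ModuleCat A) ℤ) (b : ℤ)
    (hb : ∀ n, b < n → IsZero (P.X n))
    (hproj : ∀ n, Module.Projective A (P.X n))
    (s : ℤ) (hex : ∀ m, s < m → P.ExactAt m)
    (hfg : Module.Finite A ↥(P.homology s))
    (hQ : (((tensorLeft (ModuleCat.of A (A ⧸ IsLocalRing.maximalIdeal A))).mapHomologicalComplex
      (ComplexShape.up ℤ)).obj P).ExactAt s) :
    IsZero (P.homology s) := by
  set I := IsLocalRing.maximalIdeal A with hI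
  set k : ModuleCat A := ModuleCat.of A (A ⧸ I) with hk
  set S := P.sc' (s-1) s (s+1) with hS
  have hgval : ∀ v : P.X s, S.g v = P.d s (s+1) v := fun _ => rfl
  set W := LinearMap.ker S.g.hom with hW
  have hmemW : ∀ v : P.X s, v ∈ W ↔ P.d s (s+1) v = 0 := fun v => Iff.rfl
  -- splitting above s gives a retraction r : X s → W
  obtain ⟨σ, hσ⟩ := splits_of_exact P b hb hproj s hex s (s+1) (s+2) le_rfl rfl (by omega)
  have hmc2 : ∀ v : P.X s, P.d s (s+1) v ∈ LinearMap.ker (P.d (s+1) (s+2)).hom := fun v =>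
    LinearMap.congr_fun (congrArg ModuleCat.Hom.hom (P.d_comp_d s (s+1) (s+2))) v
  have hmr : ∀ v : P.X s,
      v - σ (LinearMap.codRestrict _ (P.d s (s+1)).hom hmc2 v) ∈ W := by
    intro v
    rw [hmemW, map_sub, hσ]
    simp
  set r : P.X s →ₗ[A] ↥W :=
    LinearMap.codRestrict W
      (LinearMap.id - σ ∘ₗ LinearMap.codRestrict _ (P.d s (s+1)).hom hmc2) hmr with hr
  have hrW : ∀ u : P.X s, ∀ (hu : u ∈ W), r u = ⟨u, hu⟩ := by
    intro u hu
    apply Subtype.ext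
    have h0 : (LinearMap.codRestrict _ (P.d s (s+1)).hom hmc2) u = 0 := by
      apply Subtype.ext
      simpa using (hmemW u).1 hu
    show (LinearMap.id - σ ∘ₗ LinearMap.codRestrict _ (P.d s (s+1)).hom hmc2 : _ →ₗ[A] _) u = u
    rw [LinearMap.sub_apply, LinearMap.comp_apply, h0, map_zero, sub_zero]
    rfl
  -- main step: every cycle is a boundary modulo I • W
  have hstep : ∀ z : ↥W, ∃ y : P.X (s-1),
      z - S.moduleCatToCycles y ∈ I • (⊤ : Submodule A ↥W) := by
    intro w
    have hQc := (exactAt_iff_concrete _ (s-1) s (s+1) (by omega) rfl).1 hQ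
    have hx : LinearMap.lTensor (k : Type) (P.d s (s+1)).hom ((1 : A ⧸ I) ⊗ₜ[A] w.1) = 0 := by
      have h0 : (P.d s (s+1)).hom w.1 = 0 := (hmemW _).1 w.2
      exact (LinearMap.lTensor_tmul (k : Type) (P.d s (s+1)).hom (1 : A ⧸ I) w.1).trans
        (by rw [h0, TensorProduct.tmul_zero])
    obtain ⟨y', hy'⟩ := hQc ((1 : A ⧸ I) ⊗ₜ[A] w.1) hx
    obtain ⟨y, rfl⟩ := one_tmul_surjective I (P.X (s-1)) y'
    refine ⟨y, ?_⟩
    have hy'' : (1 : A ⧸ I) ⊗ₜ[A] (S.f y) = (1 : A ⧸ I) ⊗ₜ[A] w.1 := by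
      have hfy : S.f y = P.d (s-1) s y := rfl
      rw [hfy]
      exact hy'
    have hz : (1 : A ⧸ I) ⊗ₜ[A] (w.1 - S.f y) = 0 := by
      rw [TensorProduct.tmul_sub, hy'', sub_self]
    have hu := one_tmul_eq_zero I _ _ hz
    have huW : w.1 - S.f y ∈ W := W.sub_mem w.2 (S.moduleCatToCycles y).2
    have heq : w - S.moduleCatToCycles y = r (w.1 - S.f y) := by
      rw [hrW _ huW]
      apply Subtype.ext
      rfl
    rw [heq]
    have hm : r (w.1 - S.f y) ∈ Submodule.map r (I • (⊤ : Submodule A _)) :=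
      Submodule.mem_map_of_mem hu
    rw [Submodule.map_smul''] at hm
    exact Submodule.smul_mono le_rfl le_top hm
  -- pass to the concrete homology module
  have hprev : (ComplexShape.up ℤ).prev s = s - 1 := by rw [CochainComplex.prev]
  have hnext : (ComplexShape.up ℤ).next s = s + 1 := by rw [CochainComplex.next]
  have hiso : P.homology s ≅ S.moduleCatLeftHomologyData.H :=
    (P.homologyIsoSc' (s-1) s (s+1) hprev hnext).trans S.moduleCatHomologyIso
  have hfin : Module.Finite A ↥S.moduleCatLeftHomologyData.H :=
    Module.Finite.equiv hiso.toLinearEquiv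
  have htop : (⊤ : Submodule A ↥S.moduleCatLeftHomologyData.H) ≤
      I • (⊤ : Submodule A ↥S.moduleCatLeftHomologyData.H) := by
    intro h _
    obtain ⟨z, rfl⟩ := Submodule.Quotient.mk_surjective _ h
    obtain ⟨y, hy⟩ := hstep z
    have hmk : (Submodule.Quotient.mk z :
        ↥W ⧸ LinearMap.range S.moduleCatToCycles) =
        Submodule.Quotient.mk (z - S.moduleCatToCycles y) := by
      rw [Submodule.Quotient.eq]
      exact ⟨y, by simp⟩
    rw [hmk]
    have hm : Submodule.Quotient.mk (z - S.moduleCatToCycles y) ∈ Submodule.map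
        (LinearMap.range S.moduleCatToCycles).mkQ (I • (⊤ : Submodule A ↥W)) :=
      Submodule.mem_map_of_mem hy
    rw [Submodule.map_smul''] at hm
    exact Submodule.smul_mono le_rfl le_top hm
  have hjac : I ≤ (⊥ : Ideal A).jacobson := by
    rw [IsLocalRing.jacobson_eq_maximalIdeal ⊥ bot_ne_top]
  have hbot := Submodule.eq_bot_of_le_smul_of_le_jacobson_bot I ⊤
    (Module.finite_def.mp hfin) htop hjac
  have hsub : Subsingleton ↥S.moduleCatLeftHomologyData.H := by
    refine subsingleton_of_forall_eq 0 (fun x => ?_)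
    have hx : x ∈ (⊥ : Submodule A ↥S.moduleCatLeftHomologyData.H) := hbot ▸ Submodule.mem_top
    simpa using hx
  exact (ModuleCat.isZero_of_subsingleton S.moduleCatLeftHomologyData.H).of_iso hiso

/-- Derived Nakayama: for a bounded-above complex M with finitely generated homology over a
noetherian local ring (A, m, k), M is acyclic if and only if k ⊗^L_A M (computed by tensoring
a bounded-above complex P of projectives quasi-isomorphic to M with k) is acyclic. -/
theorem acyclic_iff_derived_tensor_residueField_acyclic
    (A : Type) [CommRing A] [IsNoetherianRing A] [IsLocalRing A]
    (M P : CochainComplex (ModuleCat A) ℤ)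
    (hMb : ∃ b : ℤ, ∀ n : ℤ, b < n → IsZero (M.X n))
    (hMfg : ∀ n : ℤ, Module.Finite A (M.homology n))
    (hPb : ∃ b : ℤ, ∀ n : ℤ, b < n → IsZero (P.X n))
    (hPproj : ∀ n : ℤ, Module.Projective A (P.X n))
    (f : P ⟶ M) (hf : QuasiIso f) :
    (∀ n : ℤ, IsZero (M.homology n)) ↔
      (∀ n : ℤ, IsZero ((((tensorLeft (ModuleCat.of A
          (A ⧸ IsLocalRing.maximalIdeal A))).mapHomologicalComplex
          (ComplexShape.up ℤ)).obj P).homology n)) := by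
  obtain ⟨bP, hbP⟩ := hPb
  set k : ModuleCat A := ModuleCat.of A (A ⧸ IsLocalRing.maximalIdeal A) with hk
  set Q := ((tensorLeft k).mapHomologicalComplex (ComplexShape.up ℤ)).obj P with hQd
  have hPM : ∀ n : ℤ, IsZero (M.homology n) ↔ IsZero (P.homology n) := by
    intro n
    have h1 : QuasiIsoAt f n := hf.quasiIsoAt n
    have h2 : IsIso (HomologicalComplex.homologyMap f n) :=
      (quasiIsoAt_iff_isIso_homologyMap f n).1 h1
    have e : P.homology n ≅ M.homology n := asIso (HomologicalComplex.homologyMap f n)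
    exact ⟨fun h => h.of_iso e, fun h => h.of_iso e.symm⟩
  constructor
  · intro hM n
    have hPex : ∀ m : ℤ, P.ExactAt m := fun m =>
      (P.exactAt_iff_isZero_homology m).2 ((hPM m).1 (hM m))
    exact (Q.exactAt_iff_isZero_homology n).1 (tensor_exactAt k P bP hbP hPproj hPex n)
  · intro hQz n
    by_contra hn
    have hbad : ¬ IsZero (P.homology n) := fun h => hn ((hPM n).2 h)
    have hbdd : ∀ z : ℤ, ¬ IsZero (P.homology z) → z ≤ bP := by
      intro z hz
      by_contra hzb
      push_neg at hzb
      apply hz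
      rw [← P.exactAt_iff_isZero_homology]
      rw [exactAt_iff_concrete P (z-1) z (z+1) (by omega) rfl]
      intro x _
      exact ⟨0, by rw [map_zero]; exact (isZero_eq_zero (hbP z hzb) x).symm⟩
    obtain ⟨s, hs, hmax⟩ := Int.exists_greatest_of_bdd ⟨bP, hbdd⟩ ⟨n, hbad⟩
    have hex : ∀ m, s < m → P.ExactAt m := by
      intro m hm
      rw [P.exactAt_iff_isZero_homology]
      by_contra hmz
      exact absurd (hmax m hmz) (by omega)
    have hfg : Module.Finite A ↥(P.homology s) := by
      have h1 : QuasiIsoAt f s := hf.quasiIsoAt s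
      have h2 : IsIso (HomologicalComplex.homologyMap f s) :=
        (quasiIsoAt_iff_isIso_homologyMap f s).1 h1
      have := hMfg s
      exact Module.Finite.equiv (asIso (HomologicalComplex.homologyMap f s)).symm.toLinearEquiv
    have hQex : Q.ExactAt s := (Q.exactAt_iff_isZero_homology s).2 (hQz s)
    exact hs (isZero_homology_of_tensor P bP hbP hPproj s hex hfg hQex)
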